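/- A regular language L over an alphabet Σ = {a₁,…,a_r} that is closed under permutations of words is determined by its Parikh image: there exists a finite family 𝒮 of r-tuples of arithmetic progressions S_{k,p} = {k + n·p : n ∈ ℕ} such that a word w belongs to L if and only if the Parikh vector Π(w) belongs to S₁ × ⋯ × S_r for some (S₁,…,S_r) ∈ 𝒮. -/

import Mathlib

/-!
Every letter `a` acts on the finite state set of a DFA by a map `f a`, and the maps
`n ↦ f a^[n]` are eventually periodic with a common threshold `K` and period `P`.
A permutation-closed language accepted by the DFA contains `w` iff it contains the word
`a₁^{|w|₁} ⋯ a_r^{|w|_r}`, whose run is `f a_r^[|w|_r] ∘ ⋯ ∘ f a₁^[|w|₁]`; so membership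
depends only on which block of the partition of `ℕ` into the singletons `{0}, …, {K - 1}`
and the residue classes mod `P` above `K` each `|w|ᵢ` lies in. These blocks are the
progressions `S_{k,p}`, and finitely many tuples of them occur.
-/

open List

section EventualProgression

/-- The block containing `n`, as `(k, p)` with block `S_{k,p}`; `p = 0` encodes a singleton. -/
def eventualProgression (K P n : ℕ) : ℕ × ℕ :=
  if n < K then (n, 0) else (K + (n - K) % P, P)

variable {K P : ℕ}

theorem exists_eq_eventualProgression_add_mul (n : ℕ) :
    ∃ m, n = (eventualProgression K P n).1 + m * (eventualProgression K P n).2 := by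
  unfold eventualProgression
  split_ifs with h
  · exact ⟨0, by simp⟩
  · exact ⟨(n - K) / P, by have := Nat.mod_add_div (n - K) P; simp only; lia⟩

theorem eventualProgression_eq_of_eq_add_mul {n k m : ℕ}
    (h : n = (eventualProgression K P k).1 + m * (eventualProgression K P k).2) :
    eventualProgression K P n = eventualProgression K P k := by
  unfold eventualProgression at h ⊢
  split_ifs at h ⊢ with hn hk hk
  · simpa using h
  · lia
  · simp only [mul_zero, add_zero] at h
    lia
  · have : n - K = (k - K) % P + m * P := by lia
    rw [this, Nat.add_mul_mod_self_right, Nat.mod_mod]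

theorem finite_range_eventualProgression (hP : 0 < P) :
    (Set.range (eventualProgression K P)).Finite := by
  refine ((Set.finite_Iio (K + P)).prod (Set.toFinite {0, P})).subset ?_
  rintro _ ⟨n, rfl⟩
  unfold eventualProgression
  split_ifs with h
  · exact ⟨by simp only [Set.mem_Iio]; lia, by simp⟩
  · exact ⟨by simpa using Nat.mod_lt (n - K) hP, by simp⟩

end EventualProgression

section Iterate

variable {σ : Type*} {f : σ → σ} {K P : ℕ}

theorem Function.iterate_add_eq_of_le (h : f^[K + P] = f^[K]) {n : ℕ}
    (hn : K ≤ n) : f^[n + P] = f^[n] := by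
  obtain ⟨j, rfl⟩ : ∃ j, n = j + K := ⟨n - K, by lia⟩
  rw [add_assoc, Function.iterate_add, h, ← Function.iterate_add]

theorem Function.iterate_add_mul_eq_of_le (h : f^[K + P] = f^[K]) {n : ℕ}
    (hn : K ≤ n) (q : ℕ) : f^[n + q * P] = f^[n] := by
  induction q with
  | zero => simp
  | succ q ih =>
    rw [add_one_mul, ← add_assoc, iterate_add_eq_of_le h (by lia), ih]

theorem Function.iterate_eventualProgression_fst (h : f^[K + P] = f^[K]) (n : ℕ) :
    f^[(eventualProgression K P n).1] = f^[n] := by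
  obtain ⟨q, hq⟩ := exists_eq_eventualProgression_add_mul (K := K) (P := P) n
  unfold eventualProgression at hq ⊢
  split_ifs at hq ⊢ with hn
  · rfl
  · conv_rhs => rw [hq]
    exact (iterate_add_mul_eq_of_le h (Nat.le_add_right _ _) q).symm

theorem Function.exists_iterate_add_eq {ι : Type*} [Finite ι] [Finite σ] (f : ι → σ → σ) :
    ∃ K P, 0 < P ∧ ∀ i, (f i)^[K + P] = (f i)^[K] := by
  obtain ⟨a, b, hab, heq⟩ :=
    Finite.exists_ne_map_eq_of_infinite fun n : ℕ => fun i => (f i)^[n]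
  rcases hab.lt_or_gt with h | h
  · refine ⟨a, b - a, by lia, fun i => ?_⟩
    rw [Nat.add_sub_cancel' h.le]
    exact (congrFun heq i).symm
  · refine ⟨b, a - b, by lia, fun i => ?_⟩
    rw [Nat.add_sub_cancel' h.le]
    exact congrFun heq i

end Iterate

section WordOfCounts

variable {α : Type*} [Fintype α] [DecidableEq α]

noncomputable def wordOfCounts (c : α → ℕ) : List α :=
  Finset.univ.toList.flatMap fun a => replicate (c a) a

theorem count_wordOfCounts (c : α → ℕ) (a : α) : (wordOfCounts c).count a = c a := by
  simp [wordOfCounts, count_flatMap, count_replicate, Function.comp_def]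

theorem perm_wordOfCounts_count (w : List α) : w ~ wordOfCounts fun a => w.count a :=
  perm_iff_count.2 fun a => (count_wordOfCounts (fun b => w.count b) a).symm

end WordOfCounts

namespace DFA

variable {α σ : Type*} (M : DFA α σ)

theorem evalFrom_replicate (s : σ) (a : α) (n : ℕ) :
    M.evalFrom s (replicate n a) = (M.step · a)^[n] s := by
  induction n generalizing s with
  | zero => rfl
  | succ n ih => exact ih (M.step s a)

theorem evalFrom_flatMap_replicate_congr {c c' : α → ℕ} (l : List α)
    (h : ∀ a ∈ l, (M.step · a)^[c a] = (M.step · a)^[c' a]) (s : σ) :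
    M.evalFrom s (l.flatMap fun a => replicate (c a) a) =
      M.evalFrom s (l.flatMap fun a => replicate (c' a) a) := by
  induction l generalizing s with
  | nil => rfl
  | cons a l ih =>
    simp only [flatMap_cons, evalFrom_of_append, evalFrom_replicate, h a mem_cons_self]
    exact ih (fun b hb => h b (mem_cons_of_mem a hb)) _

theorem mem_accepts_iff_of_eventualProgression_count_eq [Fintype α] [DecidableEq α]
    (hperm : ∀ w w' : List α, w ~ w' → (w ∈ M.accepts ↔ w' ∈ M.accepts)) {K P : ℕ}
    (hper : ∀ a, (M.step · a)^[K + P] = (M.step · a)^[K]) {w w' : List α}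
    (h : ∀ a, eventualProgression K P (w.count a) = eventualProgression K P (w'.count a)) :
    w ∈ M.accepts ↔ w' ∈ M.accepts := by
  rw [hperm _ _ (perm_wordOfCounts_count w), hperm w' _ (perm_wordOfCounts_count w')]
  refine Eq.to_iff <| congrArg (· ∈ M.accept) <|
    M.evalFrom_flatMap_replicate_congr _ (fun a _ => ?_) _
  rw [← Function.iterate_eventualProgression_fst (hper a), h a,
    Function.iterate_eventualProgression_fst (hper a)]

end DFA

/-- A permutation-closed regular language is determined by its Parikh
image via a finite family of tuples of arithmetic progressions. -/
theorem stmt_1 (r : ℕ) (L : Language (Fin r)) (hreg : L.IsRegular)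
    (hperm : ∀ w w' : List (Fin r), w.Perm w' → (w ∈ L ↔ w' ∈ L)) :
    ∃ 𝒮 : Finset (Fin r → ℕ × ℕ),
      ∀ w : List (Fin r),
        w ∈ L ↔ ∃ s ∈ 𝒮, ∀ i : Fin r, ∃ n : ℕ, w.count i = (s i).1 + n * (s i).2 := by
  obtain ⟨σ, _, M, rfl⟩ := hreg
  obtain ⟨K, P, hP, hper⟩ := Function.exists_iterate_add_eq fun a q => M.step q a
  let code (w : List (Fin r)) (i : Fin r) : ℕ × ℕ := eventualProgression K P (w.count i)
  have hfin : (code '' M.accepts).Finite :=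
    (Set.Finite.pi fun _ => finite_range_eventualProgression hP).subset <| by
      rintro _ ⟨w, -, rfl⟩ i -
      exact ⟨_, rfl⟩
  refine ⟨hfin.toFinset, fun w => ⟨fun hw => ?_, ?_⟩⟩
  · exact ⟨code w, hfin.mem_toFinset.2 ⟨w, hw, rfl⟩,
      fun i => exists_eq_eventualProgression_add_mul _⟩
  · rintro ⟨_, hs, hw⟩
    obtain ⟨w', hw', rfl⟩ := hfin.mem_toFinset.1 hs
    refine (M.mem_accepts_iff_of_eventualProgression_count_eq hperm hper fun i => ?_).2 hw'
    obtain ⟨m, hm⟩ := hw i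
    exact eventualProgression_eq_of_eq_add_mul hm
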